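/- Let A be a bounded linear operator on H. Then for every real number r ≥ 1 and every α ∈ [0,1], ber(A)^{2r} ≤ (α/2)·ber(A²)^r + ber((1 − 3α/4)·|A|^{2r} + (α/4)·|A*|^{2r}). -/

import Mathlib

/-! For a unit vector `x`, Buzano's inequality for the pair `A x`, `A† x`, averaged with weight `α`
against the Cauchy–Schwarz bound `‖⟪A x, x⟫‖² ≤ ‖A x‖²` and followed by AM–GM, bounds
`‖⟪A x, x⟫‖²` by a convex combination of `‖⟪A² x, x⟫‖`, `‖A x‖²` and `‖A† x‖²`. Convexity of
`t ↦ t ^ r` and McCarthy's inequality `⟪T x, x⟫ ^ r ≤ ⟪T ^ r x, x⟫` for `T = A† A` and `T = A A†`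
(note `|A| ^ (2r) = (A† A) ^ r`) turn this into the pointwise estimate at `x = k̂_λ`; taking the
supremum over `λ` gives the theorem. -/

set_option synthInstance.maxHeartbeats 1000000
set_option maxHeartbeats 1000000

open scoped NNReal
open ContinuousLinearMap

/-- The Berezin number of an operator `T`, relative to the family `k` of
(normalized reproducing kernel) vectors indexed by `Ω`. -/
noncomputable def ber {H : Type*} [NormedAddCommGroup H] [InnerProductSpace ℂ H]
    {Ω : Type*} (k : Ω → H) (T : H →L[ℂ] H) : ℝ :=
  ⨆ lam : Ω, ‖(inner ℂ (T (k lam)) (k lam) : ℂ)‖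

/-- The absolute value `|T| = (T*T)^(1/2)` of a bounded operator. -/
noncomputable def opAbs {H : Type*} [NormedAddCommGroup H] [InnerProductSpace ℂ H]
    [CompleteSpace H] (T : H →L[ℂ] H) : H →L[ℂ] H :=
  CFC.sqrt (adjoint T * T)

open RCLike

theorem mul_rpow_sub_one_mul_le {r s u : ℝ} (hr : 1 ≤ r) (hs : 0 ≤ s) (hu : 0 ≤ u) :
    r * s ^ (r - 1) * u ≤ u ^ r + (r - 1) * s ^ r := by
  have hr₀ : 0 < r := by linarith
  have amgm := Real.geom_mean_le_arith_mean2_weighted (inv_nonneg.mpr hr₀.le)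
    (sub_nonneg.mpr (inv_le_one_of_one_le₀ hr)) (Real.rpow_nonneg hu r)
    (Real.rpow_nonneg hs r) (add_sub_cancel _ _)
  rw [← Real.rpow_mul hu, mul_inv_cancel₀ hr₀.ne', Real.rpow_one, ← Real.rpow_mul hs,
    mul_sub, mul_one, mul_inv_cancel₀ hr₀.ne'] at amgm
  calc r * s ^ (r - 1) * u = r * (u * s ^ (r - 1)) := by ring
    _ ≤ r * (r⁻¹ * u ^ r + (1 - r⁻¹) * s ^ r) := by gcongr
    _ = u ^ r + (r - 1) * s ^ r := by field_simp

theorem rpow_convex_combination_three_le {w₁ w₂ w₃ u₁ u₂ u₃ r : ℝ} (hw₁ : 0 ≤ w₁)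
    (hw₂ : 0 ≤ w₂) (hw₃ : 0 ≤ w₃) (hw : w₁ + w₂ + w₃ = 1) (hu₁ : 0 ≤ u₁) (hu₂ : 0 ≤ u₂)
    (hu₃ : 0 ≤ u₃) (hr : 1 ≤ r) :
    (w₁ * u₁ + w₂ * u₂ + w₃ * u₃) ^ r ≤ w₁ * u₁ ^ r + w₂ * u₂ ^ r + w₃ * u₃ ^ r := by
  simpa [Fin.sum_univ_three] using
    Real.rpow_arith_mean_le_arith_mean_rpow Finset.univ ![w₁, w₂, w₃] ![u₁, u₂, u₃]
      (by intro i _; fin_cases i <;> assumption) (by simpa [Fin.sum_univ_three] using hw)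
      (by intro i _; fin_cases i <;> assumption) hr

section InnerProductSpace

variable {𝕜 E : Type*} [RCLike 𝕜] [NormedAddCommGroup E] [InnerProductSpace 𝕜 E]

/-- Buzano's inequality. -/
theorem norm_inner_mul_inner_le_of_norm_eq_one {e : E} (he : ‖e‖ = 1) (a b : E) :
    ‖inner 𝕜 a e * inner 𝕜 e b‖ ≤ (‖inner 𝕜 a b‖ + ‖a‖ * ‖b‖) / 2 := by
  -- `X` is the reflection of `a` in the line through `e`.
  set X : E := (2 * inner 𝕜 e a) • e - a
  have hX_inner : 2 * (inner 𝕜 a e * inner 𝕜 e b) = inner 𝕜 a b + inner 𝕜 X b := by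
    simp only [X, inner_sub_left, inner_smul_left, map_mul, map_ofNat, inner_conj_symm]
    ring
  have hX_norm : ‖X‖ = ‖a‖ := by
    have h : ‖X‖ ^ 2 = ‖a‖ ^ 2 := by
      rw [@norm_sub_sq 𝕜, norm_smul, he, inner_smul_left, RingHom.map_mul, mul_assoc,
        RCLike.conj_mul]
      simp only [norm_mul, RCLike.norm_ofNat, map_ofNat, mul_one]
      norm_cast
      ring
    exact (pow_left_inj₀ (norm_nonneg _) (norm_nonneg _) two_ne_zero).mp h
  have : 2 * ‖inner 𝕜 a e * inner 𝕜 e b‖ ≤ ‖inner 𝕜 a b‖ + ‖a‖ * ‖b‖ :=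
    calc 2 * ‖inner 𝕜 a e * inner 𝕜 e b‖ = ‖inner 𝕜 a b + inner 𝕜 X b‖ := by
          rw [← hX_inner]; simp only [norm_mul, RCLike.norm_ofNat]
      _ ≤ ‖inner 𝕜 a b‖ + ‖X‖ * ‖b‖ :=
          (norm_add_le _ _).trans (by gcongr; exact norm_inner_le_norm X b)
      _ = ‖inner 𝕜 a b‖ + ‖a‖ * ‖b‖ := by rw [hX_norm]
  linarith

theorem ContinuousLinearMap.re_inner_apply_le_of_le {S T : E →L[𝕜] E} (h : S ≤ T) (x : E) :
    re (inner 𝕜 (S x) x) ≤ re (inner 𝕜 (T x) x) := by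
  have := ((le_def S T).mp h).re_inner_nonneg_left x
  rwa [sub_apply, inner_sub_left, map_sub, sub_nonneg] at this

theorem ContinuousLinearMap.adjoint_mul_self_nonneg [CompleteSpace E] (A : E →L[𝕜] E) :
    0 ≤ adjoint A * A :=
  (nonneg_iff_isPositive _).mpr (isPositive_adjoint_comp_self A)

theorem norm_inner_apply_sq_le [CompleteSpace E] (A : E →L[𝕜] E) {x : E} (hx : ‖x‖ = 1)
    {α : ℝ} (hα : α ∈ Set.Icc (0 : ℝ) 1) :
    ‖inner 𝕜 (A x) x‖ ^ 2 ≤ α / 2 * ‖inner 𝕜 ((A * A) x) x‖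
      + (1 - 3 * α / 4) * ‖A x‖ ^ 2 + α / 4 * ‖adjoint A x‖ ^ 2 := by
  obtain ⟨hα₀, hα₁⟩ := hα
  have buzano : ‖inner 𝕜 (A x) x‖ ^ 2
      ≤ (‖inner 𝕜 ((A * A) x) x‖ + ‖A x‖ * ‖adjoint A x‖) / 2 := by
    have h := norm_inner_mul_inner_le_of_norm_eq_one (𝕜 := 𝕜) hx (A x) (adjoint A x)
    rw [adjoint_inner_right, adjoint_inner_right, ← sq, norm_pow] at h
    exact h
  have cauchy_schwarz : ‖inner 𝕜 (A x) x‖ ≤ ‖A x‖ := by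
    simpa [hx] using norm_inner_le_norm (𝕜 := 𝕜) (A x) x
  have amgm : ‖A x‖ * ‖adjoint A x‖ ≤ (‖A x‖ ^ 2 + ‖adjoint A x‖ ^ 2) / 2 := by
    nlinarith [sq_nonneg (‖A x‖ - ‖adjoint A x‖)]
  nlinarith [mul_le_mul_of_nonneg_left buzano hα₀, mul_le_mul_of_nonneg_left amgm hα₀,
    mul_le_mul_of_nonneg_left (pow_le_pow_left₀ (norm_nonneg _) cauchy_schwarz 2)
      (sub_nonneg.mpr hα₁)]

end InnerProductSpace

section Operator

variable {H : Type*} [NormedAddCommGroup H] [InnerProductSpace ℂ H] [CompleteSpace H]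

/-- McCarthy's inequality. -/
theorem rpow_re_inner_le_re_inner_rpow {T : H →L[ℂ] H} (hT : 0 ≤ T) {x : H} (hx : ‖x‖ = 1)
    {r : ℝ} (hr : 1 ≤ r) : re (inner ℂ (T x) x) ^ r ≤ re (inner ℂ (CFC.rpow T r x) x) := by
  set s := re (inner ℂ (T x) x)
  have hs : 0 ≤ s := ((nonneg_iff_isPositive T).mp hT).re_inner_nonneg_left x
  -- The tangent line of `u ↦ u ^ r` at `s`, lifted to an operator inequality by the CFC.
  let c₁ : ℝ≥0 := ⟨r * s ^ (r - 1), by positivity⟩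
  let c₂ : ℝ≥0 := ⟨(r - 1) * s ^ r, mul_nonneg (by linarith) (by positivity)⟩
  have tangent : c₁ • T ≤ CFC.rpow T r + algebraMap ℝ≥0 _ c₂ := by
    calc c₁ • T = cfc (fun u : ℝ≥0 => c₁ * u) T := (cfc_const_mul_id c₁ T).symm
      _ ≤ cfc (fun u : ℝ≥0 => u ^ r + c₂) T := by
          refine cfc_mono (hg := ((NNReal.continuous_rpow_const (by linarith)).add
            continuous_const).continuousOn) fun u _ => ?_
          rw [← NNReal.coe_le_coe]
          exact mul_rpow_sub_one_mul_le hr hs u.coe_nonneg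
      _ = CFC.rpow T r + algebraMap ℝ≥0 _ c₂ := by
          rw [cfc_add T _ _ (NNReal.continuous_rpow_const (by linarith)).continuousOn,
            cfc_const c₂ T]
          rfl
  have h := re_inner_apply_le_of_le tangent x
  rw [Algebra.algebraMap_eq_smul_one, NNReal.smul_def, NNReal.smul_def, add_apply, smul_apply,
    smul_apply, one_apply_eq_self, inner_add_left, inner_smul_left_eq_smul,
    inner_smul_left_eq_smul, inner_self_eq_norm_sq_to_K, hx] at h
  simp only [map_add, RCLike.smul_re, ofReal_one, one_pow, one_re, mul_one] at h
  have hsr : s ^ r = c₁ * s - c₂ := by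
    have := Real.rpow_add_one' hs (y := r - 1) (by linarith)
    rw [sub_add_cancel] at this
    change s ^ r = r * s ^ (r - 1) * s - (r - 1) * s ^ r
    rw [mul_assoc, ← this]
    ring
  linarith

theorem rpow_opAbs_two_mul (A : H →L[ℂ] H) {r : ℝ} (hr : 0 ≤ r) :
    CFC.rpow (opAbs A) (2 * r) = CFC.rpow (adjoint A * A) r := by
  have := CFC.rpow_sqrt_nnreal (a := adjoint A * A) (x := (2 * r).toNNReal)
    (adjoint_mul_self_nonneg A)
  rwa [Real.coe_toNNReal _ (by positivity), mul_div_cancel_left₀ r two_ne_zero] at this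

theorem norm_apply_sq_rpow_le (A : H →L[ℂ] H) {x : H} (hx : ‖x‖ = 1) {r : ℝ} (hr : 1 ≤ r) :
    (‖A x‖ ^ 2) ^ r ≤ re (inner ℂ (CFC.rpow (opAbs A) (2 * r) x) x) := by
  rw [rpow_opAbs_two_mul A (by linarith), apply_norm_sq_eq_inner_adjoint_left, ← mul_def]
  exact rpow_re_inner_le_re_inner_rpow (adjoint_mul_self_nonneg A) hx hr

theorem norm_inner_apply_rpow_le (A : H →L[ℂ] H) {x : H} (hx : ‖x‖ = 1) {r : ℝ} (hr : 1 ≤ r)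
    {α : ℝ} (hα : α ∈ Set.Icc (0 : ℝ) 1) :
    ‖inner ℂ (A x) x‖ ^ (2 * r) ≤ α / 2 * ‖inner ℂ ((A * A) x) x‖ ^ r
      + re (inner ℂ (((1 - 3 * α / 4) • CFC.rpow (opAbs A) (2 * r)
          + (α / 4) • CFC.rpow (opAbs (adjoint A)) (2 * r)) x) x) := by
  have hα₀ : 0 ≤ α := hα.1
  have hw₂ : 0 ≤ 1 - 3 * α / 4 := by linarith [hα.2]
  calc ‖inner ℂ (A x) x‖ ^ (2 * r) = (‖inner ℂ (A x) x‖ ^ 2) ^ r := by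
        rw [Real.rpow_mul (norm_nonneg _), Real.rpow_two]
    _ ≤ (α / 2 * ‖inner ℂ ((A * A) x) x‖ + (1 - 3 * α / 4) * ‖A x‖ ^ 2
          + α / 4 * ‖adjoint A x‖ ^ 2) ^ r := by
        gcongr
        exact norm_inner_apply_sq_le A hx hα
    _ ≤ α / 2 * ‖inner ℂ ((A * A) x) x‖ ^ r + (1 - 3 * α / 4) * (‖A x‖ ^ 2) ^ r
          + α / 4 * (‖adjoint A x‖ ^ 2) ^ r :=
        rpow_convex_combination_three_le (by positivity) hw₂ (by positivity) (by ring)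
          (norm_nonneg _) (by positivity) (by positivity) hr
    _ ≤ α / 2 * ‖inner ℂ ((A * A) x) x‖ ^ r
          + ((1 - 3 * α / 4) * re (inner ℂ (CFC.rpow (opAbs A) (2 * r) x) x)
            + α / 4 * re (inner ℂ (CFC.rpow (opAbs (adjoint A)) (2 * r) x) x)) := by
        rw [add_assoc]
        gcongr
        · exact norm_apply_sq_rpow_le A hx hr
        · exact norm_apply_sq_rpow_le (adjoint A) hx hr
    _ = _ := by
        simp only [add_apply, smul_apply, inner_add_left, inner_smul_left_eq_smul, map_add,
          RCLike.smul_re]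

end Operator

section Berezin

variable {H Ω : Type*} [NormedAddCommGroup H] [InnerProductSpace ℂ H] {k : Ω → H}

theorem ber_nonneg (T : H →L[ℂ] H) : 0 ≤ ber k T :=
  Real.iSup_nonneg fun _ => norm_nonneg _

theorem norm_inner_le_ber (hk : ∀ lam, ‖k lam‖ ≤ 1) (T : H →L[ℂ] H) (lam : Ω) :
    ‖inner ℂ (T (k lam)) (k lam)‖ ≤ ber k T := by
  refine le_ciSup (f := fun μ => ‖inner ℂ (T (k μ)) (k μ)‖) ⟨‖T‖, ?_⟩ lam
  rintro _ ⟨μ, rfl⟩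
  calc ‖inner ℂ (T (k μ)) (k μ)‖ ≤ ‖T (k μ)‖ * ‖k μ‖ := norm_inner_le_norm _ _
    _ ≤ ‖T‖ * ‖k μ‖ * ‖k μ‖ := by gcongr; exact T.le_opNorm _
    _ ≤ ‖T‖ * 1 * 1 := by gcongr <;> exact hk μ
    _ = ‖T‖ := by ring

theorem ber_rpow_le_of_forall_le [Nonempty Ω] {T : H →L[ℂ] H} {p M : ℝ} (hp : 0 < p)
    (h : ∀ lam, ‖inner ℂ (T (k lam)) (k lam)‖ ^ p ≤ M) : ber k T ^ p ≤ M := by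
  have hM : 0 ≤ M := (Real.rpow_nonneg (norm_nonneg _) p).trans (h (Classical.arbitrary Ω))
  refine (Real.le_rpow_inv_iff_of_pos (ber_nonneg T) hM hp).mp (ciSup_le fun lam => ?_)
  exact (Real.le_rpow_inv_iff_of_pos (norm_nonneg _) hM hp).mpr (h lam)

end Berezin

theorem berezin_power_inequality_with_square'
    {H : Type*} [NormedAddCommGroup H] [InnerProductSpace ℂ H] [CompleteSpace H]
    {Ω : Type*} [Nonempty Ω] (k : Ω → H) (hk : ∀ lam, ‖k lam‖ = 1)
    (A : H →L[ℂ] H) (r : ℝ) (hr : 1 ≤ r) (α : ℝ) (hα : α ∈ Set.Icc (0 : ℝ) 1) :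
    ber k A ^ (2 * r) ≤
      α / 2 * ber k (A * A) ^ r
        + ber k ((1 - 3 * α / 4) • CFC.rpow (opAbs A) (2 * r)
            + (α / 4) • CFC.rpow (opAbs (adjoint A)) (2 * r)) := by
  have hk' : ∀ lam, ‖k lam‖ ≤ 1 := fun lam => (hk lam).le
  refine ber_rpow_le_of_forall_le (by linarith) fun lam => ?_
  refine (norm_inner_apply_rpow_le A (hk lam) hr hα).trans ?_
  gcongr
  · linarith [hα.1]
  · exact norm_inner_le_ber hk' _ lam
  · exact (re_le_norm _).trans (norm_inner_le_ber hk' _ lam)
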